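/- For every μ ≥ 2 one has Φ₊(μ) = sup_{p > 0} ( p·μ − 4·sinh(p/2) ), i.e. Φ₊ on [2, ∞) is the Legendre–Fenchel transform, over positive arguments, of the function Υ(p) = 4·sinh(p/2). -/

import Mathlib

/-- Inverse hyperbolic cosine, `arcosh x = log (x + √(x² − 1))`. -/
noncomputable def arcosh (x : ℝ) : ℝ := Real.log (x + Real.sqrt (x ^ 2 - 1))

/-- The upper-tail rate function `Φ₊(μ) = 2μ·arcosh(μ/2) − 2√(μ² − 4)`. -/
noncomputable def PhiPlus (μ : ℝ) : ℝ :=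
  2 * μ * arcosh (μ / 2) - 2 * Real.sqrt (μ ^ 2 - 4)

/-!
Write `μ = 2 cosh t` with `t ≥ 0`. Then `p μ − 4 sinh (p/2) = 4 (q cosh t − sinh q)` with `q = p/2`,
and since `sinh` is convex on `[0, ∞)` it lies above its tangent at `t`, so this is at most its
value `4 (t cosh t − sinh t) = Φ₊(μ)` at `q = t`. That value is attained at `p = 2t` when `μ > 2`
and approached as `p → 0⁺` when `μ = 2`.
-/

open Set Real

lemma ConvexOn.add_mul_sub_le_of_hasDerivAt {S : Set ℝ} {f : ℝ → ℝ} {f' x y : ℝ}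
    (hf : ConvexOn ℝ S f) (hx : x ∈ S) (hy : y ∈ S) (hfx : HasDerivAt f f' x) :
    f x + f' * (y - x) ≤ f y := by
  rcases lt_trichotomy x y with hxy | rfl | hyx
  · have := hf.le_slope_of_hasDerivAt hx hy hxy hfx
    rw [slope_def_field, le_div_iff₀ (sub_pos.2 hxy)] at this
    linarith
  · simp
  · have := hf.slope_le_of_hasDerivAt hy hx hyx hfx
    rw [slope_def_field, div_le_iff₀ (sub_pos.2 hyx)] at this
    linarith

lemma csSup_image_eq_of_mem_closure {α β : Type*} [TopologicalSpace α]
    [ConditionallyCompleteLinearOrder β] [TopologicalSpace β] [OrderTopology β]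
    {f : α → β} {s : Set α} {a : α} (hf : ContinuousWithinAt f s a) (ha : a ∈ closure s)
    (hle : ∀ x ∈ s, f x ≤ f a) : sSup (f '' s) = f a := by
  have hmem : f a ∈ closure (f '' s) := hf.mem_closure_image ha
  refine (isLUB_of_mem_closure ?_ hmem).csSup_eq (closure_nonempty_iff.1 ⟨_, hmem⟩)
  rintro _ ⟨x, hx, rfl⟩
  exact hle x hx

lemma convexOn_sinh : ConvexOn ℝ (Ici 0) sinh := by
  refine convexOn_of_hasDerivWithinAt2_nonneg (convex_Ici 0) continuous_sinh.continuousOn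
    (fun x _ ↦ (hasDerivAt_sinh x).hasDerivWithinAt)
    (fun x _ ↦ (hasDerivAt_cosh x).hasDerivWithinAt) fun x hx ↦ ?_
  rw [interior_Ici] at hx
  exact sinh_nonneg_iff.2 (le_of_lt hx)

lemma arcosh_eq_real_arcosh : _root_.arcosh = Real.arcosh := rfl

lemma phiPlus_two_mul_cosh {t : ℝ} (ht : 0 ≤ t) :
    PhiPlus (2 * cosh t) = 4 * (t * cosh t - sinh t) := by
  have hsqrt : √((2 * cosh t) ^ 2 - 4) = 2 * sinh t := by
    rw [show (2 * cosh t) ^ 2 - 4 = (2 * sinh t) ^ 2 by nlinarith [cosh_sq t]]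
    exact sqrt_sq (by positivity)
  rw [PhiPlus, mul_div_cancel_left₀ _ two_ne_zero, arcosh_eq_real_arcosh, arcosh_cosh ht, hsqrt]
  ring

/-- For `μ ≥ 2`, `Φ₊(μ) = sup_{p > 0} ( p·μ − 4·sinh(p/2) )`: on `[2, ∞)`, `Φ₊` is the
Legendre–Fenchel transform, over positive arguments, of `Υ(p) = 4·sinh(p/2)`. -/
theorem phiPlus_eq_legendre (μ : ℝ) (hμ : 2 ≤ μ) :
    PhiPlus μ = sSup ((fun p : ℝ => p * μ - 4 * Real.sinh (p / 2)) '' Set.Ioi 0) := by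
  obtain ⟨t, ht, rfl⟩ : ∃ t, 0 ≤ t ∧ μ = 2 * cosh t :=
    ⟨Real.arcosh (μ / 2), arcosh_nonneg (by linarith), by rw [cosh_arcosh (by linarith)]; ring⟩
  have htangent (p : ℝ) (hp : p ∈ Ioi 0) : sinh t + cosh t * (p / 2 - t) ≤ sinh (p / 2) :=
    convexOn_sinh.add_mul_sub_le_of_hasDerivAt ht (half_pos hp).le (hasDerivAt_sinh t)
  rw [csSup_image_eq_of_mem_closure (a := 2 * t) (by fun_prop)
      (by rw [closure_Ioi, mem_Ici]; linarith) fun p hp ↦ ?_, phiPlus_two_mul_cosh ht]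
  · rw [mul_div_cancel_left₀ _ two_ne_zero]
    ring
  · rw [mul_div_cancel_left₀ _ two_ne_zero]
    nlinarith [htangent p hp]
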